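/- arXiv:0906.3196 — 3 statements merged into one kernel-verified Lean document; each statement's English description precedes it below -/
import Mathlib

section
/- Let A be a Hermitian n₁×n₁ complex matrix, C a Hermitian n₂×n₂ complex matrix, B an n₁×n₂ complex matrix, and Q = fromBlocks A B Bᴴ C. Then Q and 1 − Q are both positive semidefinite if and only if 0 ≤ A ≤ 1, 0 ≤ C ≤ 1, and there exist n₁×n₂ complex matrices D₁ and D₂, each of operator norm at most 1, such that B = A^{1/2} D₁ C^{1/2} and B = (1 − A)^{1/2} D₂ (1 − C)^{1/2}, where A^{1/2}, C^{1/2}, (1 − A)^{1/2}, (1 − C)^{1/2} are the positive semidefinite square roots. -/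
/-!
Positivity of `Q` means `Q = Mᴴ * M`; splitting `M = [X Y]` into column blocks gives
`A = Xᴴ * X`, `C = Yᴴ * Y` and `B = Xᴴ * Y`. Polar decomposition `X = V * A^{1/2}`,
`Y = W * C^{1/2}` with contractions `V`, `W` then gives `B = A^{1/2} * (Vᴴ * W) * C^{1/2}`.
Conversely, for a contraction `D` the block matrix is `Mᴴ * M` with
`M = [[A^{1/2}, D * C^{1/2}], [0, (1 - Dᴴ * D)^{1/2} * C^{1/2}]]`.
Applying this to `Q` and to `1 - Q = fromBlocks (1 - A) (-B) (-B)ᴴ (1 - C)` gives the theorem.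
-/

open Matrix
open scoped ComplexOrder
open scoped Matrix.Norms.L2Operator
open scoped MatrixOrder

namespace Matrix

variable {m n : Type*} [Fintype m] [Fintype n]

theorem l2_opNorm_le_one_iff [DecidableEq n] (D : Matrix m n ℂ) : ‖D‖ ≤ 1 ↔ Dᴴ * D ≤ 1 := by
  rw [← CStarAlgebra.norm_le_one_iff_of_nonneg _ (posSemidef_conjTranspose_mul_self D).nonneg,
    l2_opNorm_conjTranspose_mul_self, ← abs_le_one_iff_mul_self_le_one, abs_norm]

/- With `S = (Xᴴ * X)^{1/2}`, `T` is the pseudo-inverse of `S` and `E = T * S` the projection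
onto the range of `S`; `X * (1 - E) = 0` because `(1 - E) * S = 0`. -/
theorem exists_l2_opNorm_le_one_eq_mul_sqrt [DecidableEq n] (X : Matrix m n ℂ) :
    ∃ V : Matrix m n ℂ, ‖V‖ ≤ 1 ∧ X = V * CFC.sqrt (Xᴴ * X) := by
  set S := CFC.sqrt (Xᴴ * X)
  have hSS : S * S = Xᴴ * X :=
    CFC.sqrt_mul_sqrt_self _ (posSemidef_conjTranspose_mul_self X).nonneg
  have hS : cfc (fun x : ℝ => x) S = S := cfc_id' ℝ S (CFC.sqrt_nonneg _).isSelfAdjoint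
  have hmul (f g : ℝ → ℝ) : cfc f S * cfc g S = cfc (fun x => f x * g x) S :=
    (cfc_mul f g S (S.finite_real_spectrum.continuousOn f)
      (S.finite_real_spectrum.continuousOn g)).symm
  set T := cfc (·⁻¹ : ℝ → ℝ) S
  set E := cfc (fun x : ℝ => x⁻¹ * x) S
  have hT : Tᴴ = T := IsSelfAdjoint.cfc
  have hE : Eᴴ = E := IsSelfAdjoint.cfc
  have hTS : T * S = E := by rw [← hS, hmul]
  have hST : S * T = E := by rw [← hS, hmul]; exact cfc_congr fun x _ => mul_comm _ _
  have hES : E * S = S := by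
    rw [← hS, hmul]
    exact cfc_congr fun x _ => by rcases eq_or_ne x 0 with rfl | hx <;> simp [*]
  have hEE : E * E ≤ 1 := by
    rw [hmul]
    exact cfc_le_one _ _ fun x _ => by rcases eq_or_ne x 0 with rfl | hx <;> simp [*]
  refine ⟨X * T, ?_, ?_⟩
  · rw [l2_opNorm_le_one_iff]
    calc (X * T)ᴴ * (X * T) = T * S * (S * T) := by
          rw [conjTranspose_mul, hT, Matrix.mul_assoc, ← Matrix.mul_assoc Xᴴ, ← hSS]
          simp only [Matrix.mul_assoc]
      _ ≤ 1 := by rwa [hTS, hST]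
  · have hXE : (X * (1 - E))ᴴ * (X * (1 - E)) = 0 := by
      have h1E : (1 - E)ᴴ * S = 0 := by
        rw [conjTranspose_sub, conjTranspose_one, hE, sub_mul, one_mul, hES, sub_self]
      rw [conjTranspose_mul, Matrix.mul_assoc, ← Matrix.mul_assoc Xᴴ, ← hSS,
        ← Matrix.mul_assoc, ← Matrix.mul_assoc, h1E, Matrix.zero_mul, Matrix.zero_mul]
    rw [conjTranspose_mul_self_eq_zero, Matrix.mul_sub, Matrix.mul_one, sub_eq_zero] at hXE
    rw [Matrix.mul_assoc, hTS, ← hXE]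

theorem conjTranspose_sqrt [DecidableEq n] (A : Matrix n n ℂ) : (CFC.sqrt A)ᴴ = CFC.sqrt A :=
  (CFC.sqrt_nonneg A).isSelfAdjoint

theorem posSemidef_fromBlocks_iff [DecidableEq m] [DecidableEq n] (A : Matrix m m ℂ)
    (B : Matrix m n ℂ) (C : Matrix n n ℂ) :
    (fromBlocks A B Bᴴ C).PosSemidef ↔ A.PosSemidef ∧ C.PosSemidef ∧
      ∃ D : Matrix m n ℂ, ‖D‖ ≤ 1 ∧ B = CFC.sqrt A * D * CFC.sqrt C := by
  constructor
  · intro h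
    obtain ⟨M, hM⟩ := CStarAlgebra.nonneg_iff_eq_star_mul_self.mp h.nonneg
    obtain ⟨X, Y, rfl⟩ : ∃ X Y, M = fromCols X Y := ⟨_, _, (fromCols_toCols M).symm⟩
    rw [star_eq_conjTranspose, conjTranspose_fromCols_eq_fromRows_conjTranspose,
      fromRows_mul_fromCols, fromBlocks_inj] at hM
    obtain ⟨rfl, rfl, -, rfl⟩ := hM
    obtain ⟨V, hV, hXV⟩ := exists_l2_opNorm_le_one_eq_mul_sqrt X
    obtain ⟨W, hW, hYW⟩ := exists_l2_opNorm_le_one_eq_mul_sqrt Y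
    refine ⟨posSemidef_conjTranspose_mul_self X, posSemidef_conjTranspose_mul_self Y, Vᴴ * W,
      ?_, ?_⟩
    · calc ‖Vᴴ * W‖ ≤ ‖Vᴴ‖ * ‖W‖ := l2_opNorm_mul _ _
        _ ≤ 1 := by rw [l2_opNorm_conjTranspose]; exact mul_le_one₀ hV (norm_nonneg _) hW
    · nth_rw 1 [hXV, hYW]
      rw [conjTranspose_mul, conjTranspose_sqrt]
      simp only [Matrix.mul_assoc]
  · rintro ⟨hA, hC, D, hD, rfl⟩
    set R := CFC.sqrt (1 - Dᴴ * D)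
    have hR : R * R = 1 - Dᴴ * D :=
      CFC.sqrt_mul_sqrt_self _ (sub_nonneg.mpr ((l2_opNorm_le_one_iff D).mp hD))
    have hM : fromBlocks A (CFC.sqrt A * D * CFC.sqrt C) (CFC.sqrt A * D * CFC.sqrt C)ᴴ C =
        (fromBlocks (CFC.sqrt A) (D * CFC.sqrt C) 0 (R * CFC.sqrt C))ᴴ *
          fromBlocks (CFC.sqrt A) (D * CFC.sqrt C) 0 (R * CFC.sqrt C) := by
      rw [fromBlocks_conjTranspose, fromBlocks_multiply]
      simp only [conjTranspose_mul, conjTranspose_sqrt, conjTranspose_zero, Matrix.zero_mul,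
        Matrix.mul_zero, add_zero, Matrix.mul_assoc]
      congr
      · exact (CFC.sqrt_mul_sqrt_self A hA.nonneg).symm
      · rw [conjTranspose_sqrt, ← Matrix.mul_add, ← Matrix.mul_assoc Dᴴ, ← Matrix.mul_assoc,
          ← Matrix.add_mul, hR, add_sub_cancel, Matrix.one_mul,
          CFC.sqrt_mul_sqrt_self C hC.nonneg]
    rw [hM]
    exact posSemidef_conjTranspose_mul_self _

theorem one_sub_fromBlocks {l o α : Type*} [DecidableEq l] [DecidableEq o] [Ring α]
    (A : Matrix l l α) (B : Matrix l o α) (C : Matrix o l α) (D : Matrix o o α) :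
    1 - fromBlocks A B C D = fromBlocks (1 - A) (-B) (-C) (1 - D) := by
  rw [← fromBlocks_one, sub_eq_add_neg, fromBlocks_neg, fromBlocks_add]
  simp only [← sub_eq_add_neg, zero_sub]

end Matrix

theorem stmt_2_general {n₁ n₂ : ℕ}
    (A : Matrix (Fin n₁) (Fin n₁) ℂ) (C : Matrix (Fin n₂) (Fin n₂) ℂ)
    (B : Matrix (Fin n₁) (Fin n₂) ℂ)
    (Q : Matrix (Fin n₁ ⊕ Fin n₂) (Fin n₁ ⊕ Fin n₂) ℂ)
    (hQ : Q = fromBlocks A B Bᴴ C) :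
    (Q.PosSemidef ∧ (1 - Q).PosSemidef) ↔
      ∃ (hA₀ : A.PosSemidef) (hA₁ : (1 - A).PosSemidef)
        (hC₀ : C.PosSemidef) (hC₁ : (1 - C).PosSemidef)
        (D₁ D₂ : Matrix (Fin n₁) (Fin n₂) ℂ),
        ‖D₁‖ ≤ 1 ∧ ‖D₂‖ ≤ 1 ∧
        B = CFC.sqrt A * D₁ * CFC.sqrt C ∧
        B = CFC.sqrt (1 - A) * D₂ * CFC.sqrt (1 - C) := by
  have neg_iff (S : Matrix (Fin n₁) (Fin n₁) ℂ) (T : Matrix (Fin n₂) (Fin n₂) ℂ) :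
      (∃ D : Matrix (Fin n₁) (Fin n₂) ℂ, ‖D‖ ≤ 1 ∧ -B = S * D * T) ↔
        ∃ D : Matrix (Fin n₁) (Fin n₂) ℂ, ‖D‖ ≤ 1 ∧ B = S * D * T :=
    (Equiv.neg _).exists_congr fun D => by
      rw [Equiv.neg_apply, norm_neg, Matrix.mul_neg, Matrix.neg_mul, neg_eq_iff_eq_neg]
  rw [hQ, one_sub_fromBlocks, ← conjTranspose_neg, posSemidef_fromBlocks_iff,
    posSemidef_fromBlocks_iff, neg_iff]
  constructor
  · rintro ⟨⟨hA₀, hC₀, D₁, hD₁, hB₁⟩, hA₁, hC₁, D₂, hD₂, hB₂⟩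
    exact ⟨hA₀, hA₁, hC₀, hC₁, D₁, D₂, hD₁, hD₂, hB₁, hB₂⟩
  · rintro ⟨hA₀, hA₁, hC₀, hC₁, D₁, D₂, hD₁, hD₂, hB₁, hB₂⟩
    exact ⟨⟨hA₀, hC₀, D₁, hD₁, hB₁⟩, hA₁, hC₁, D₂, hD₂, hB₂⟩

/-- For `Q = fromBlocks A B Bᴴ C` with `A`, `C` Hermitian, `Q` and `1 - Q` are positive
semidefinite iff `0 ≤ A ≤ 1`, `0 ≤ C ≤ 1` and there are contractions `D₁`, `D₂` (in the
ℓ²-operator norm) with `B = A^{1/2} D₁ C^{1/2}` and `B = (1-A)^{1/2} D₂ (1-C)^{1/2}`. -/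
theorem stmt_2 {n₁ n₂ : ℕ}
    (A : Matrix (Fin n₁) (Fin n₁) ℂ) (C : Matrix (Fin n₂) (Fin n₂) ℂ)
    (B : Matrix (Fin n₁) (Fin n₂) ℂ)
    (hA : A.IsHermitian) (hC : C.IsHermitian)
    (Q : Matrix (Fin n₁ ⊕ Fin n₂) (Fin n₁ ⊕ Fin n₂) ℂ)
    (hQ : Q = fromBlocks A B Bᴴ C) :
    (Q.PosSemidef ∧ (1 - Q).PosSemidef) ↔
      ∃ (hA₀ : A.PosSemidef) (hA₁ : (1 - A).PosSemidef)
        (hC₀ : C.PosSemidef) (hC₁ : (1 - C).PosSemidef)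
        (D₁ D₂ : Matrix (Fin n₁) (Fin n₂) ℂ),
        ‖D₁‖ ≤ 1 ∧ ‖D₂‖ ≤ 1 ∧
        B = CFC.sqrt A * D₁ * CFC.sqrt C ∧
        B = CFC.sqrt (1 - A) * D₂ * CFC.sqrt (1 - C) :=
  stmt_2_general A C B Q hQ
end

section
/- Let A be a Hermitian n₁×n₁ complex matrix, C a Hermitian n₂×n₂ complex matrix such that both C and 1 − C are positive definite, and B an n₁×n₂ complex matrix satisfying B C⁻¹ Bᴴ ≤ A and B (1 − C)⁻¹ Bᴴ ≤ 1 − A. Then for every positive semidefinite n₂×n₂ complex matrix L, the matrix Ã = A − B(L − 1)(1 − C + CL)⁻¹Bᴴ satisfies 0 ≤ Ã ≤ 1, i.e. both Ã and 1 − Ã are positive semidefinite. -/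
/-!
Put `D = 1 - C` and `N = 1 - C + C L`. Since `C + D = 1`, two resolvent-type identities hold:
`(L - 1) N⁻¹ = C⁻¹ - (N C)⁻¹` and `(L - 1) N⁻¹ = D⁻¹ L N⁻¹ - D⁻¹`. Hence
`Ã = (A - B C⁻¹ Bᴴ) + B (N C)⁻¹ Bᴴ` and `1 - Ã = (1 - A - B D⁻¹ Bᴴ) + B (D⁻¹ L N⁻¹) Bᴴ`.
The first correction is positive because `N C = D C + C L C` is positive definite (`C` and `D`
commute); the second because its congruence by `N` is `Nᴴ D⁻¹ L = L + L (C D⁻¹) L`.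
-/

open Matrix
open scoped ComplexOrder

namespace Matrix

variable {n : Type*} [Fintype n] [DecidableEq n]

section Identities

variable {α : Type*} [CommRing α] {C L : Matrix n n α}

theorem sub_one_mul_inv_eq_inv_sub_inv (hC : IsUnit C) (hN : IsUnit (1 - C + C * L)) :
    (L - 1) * (1 - C + C * L)⁻¹ = C⁻¹ - ((1 - C + C * L) * C)⁻¹ := by
  set N := 1 - C + C * L with hN_def
  rw [isUnit_iff_isUnit_det] at hC hN
  calc (L - 1) * N⁻¹ = C⁻¹ * (C * (L - 1)) * N⁻¹ := by rw [nonsing_inv_mul_cancel_left _ _ hC]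
    _ = C⁻¹ * (N - 1) * N⁻¹ := by rw [hN_def]; noncomm_ring
    _ = C⁻¹ - (N * C)⁻¹ := by
      rw [mul_inv_rev, mul_assoc, sub_mul, mul_nonsing_inv _ hN, one_mul, mul_sub, mul_one]

theorem sub_one_mul_inv_eq_inv_mul_mul_inv_sub_inv (hD : IsUnit (1 - C))
    (hN : IsUnit (1 - C + C * L)) :
    (L - 1) * (1 - C + C * L)⁻¹ = (1 - C)⁻¹ * L * (1 - C + C * L)⁻¹ - (1 - C)⁻¹ := by
  set N := 1 - C + C * L with hN_def
  set D := 1 - C with hD_def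
  rw [isUnit_iff_isUnit_det] at hD hN
  calc (L - 1) * N⁻¹ = D⁻¹ * (D * (L - 1)) * N⁻¹ := by rw [nonsing_inv_mul_cancel_left _ _ hD]
    _ = D⁻¹ * (L - N) * N⁻¹ := by rw [hN_def, hD_def]; noncomm_ring
    _ = D⁻¹ * L * N⁻¹ - D⁻¹ := by
      rw [mul_sub, sub_mul, mul_assoc D⁻¹ N, mul_nonsing_inv _ hN, mul_one]

end Identities

section Positivity

variable {𝕜 : Type*} [RCLike 𝕜] {C L : Matrix n n 𝕜}

open scoped MatrixOrder in
theorem PosDef.one_sub_add_mul_mul_self (hC : C.PosDef) (hC' : (1 - C).PosDef)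
    (hL : L.PosSemidef) : ((1 - C + C * L) * C).PosDef := by
  have hDC : ((1 - C) * C).PosDef :=
    ((hC'.isStrictlyPositive.commute_iff hC.isStrictlyPositive).mp
      ((Commute.one_left C).sub_left (Commute.refl C))).posDef
  have hCLC : (C * L * C).PosSemidef := by
    simpa only [hC.isHermitian.eq] using hL.conjTranspose_mul_mul_same C
  rw [show (1 - C + C * L) * C = (1 - C) * C + C * L * C by noncomm_ring]
  exact hDC.add_posSemidef hCLC

theorem isUnit_one_sub_add_mul (hC : C.PosDef) (hC' : (1 - C).PosDef) (hL : L.PosSemidef) :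
    IsUnit (1 - C + C * L) :=
  isUnit_of_mul_isUnit_left (hC.one_sub_add_mul_mul_self hC' hL).isUnit

open scoped MatrixOrder in
theorem posSemidef_inv_one_sub_mul_mul_inv (hC : C.PosSemidef) (hC' : (1 - C).PosDef)
    (hL : L.PosSemidef) (hN : IsUnit (1 - C + C * L)) :
    ((1 - C)⁻¹ * L * (1 - C + C * L)⁻¹).PosSemidef := by
  set N := 1 - C + C * L with hN_def
  set D := 1 - C with hD_def
  have hCD : (C * D⁻¹).PosSemidef := by
    have : Commute C D⁻¹ := by
      have := hC'.isUnit.invertible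
      rw [← invOf_eq_nonsing_inv]
      exact ((Commute.one_right C).sub_right (Commute.refl C)).invOf_right
    exact (this.mul_nonneg hC.nonneg hC'.inv.posSemidef.nonneg).posSemidef
  have hNH : Nᴴ = D + L * C := by
    simp only [hN_def, hD_def, conjTranspose_add, conjTranspose_sub, conjTranspose_mul,
      conjTranspose_one, hC.isHermitian.eq, hL.isHermitian.eq]
  have hconj : star N * (D⁻¹ * L * N⁻¹) * N = L + L * (C * D⁻¹) * L := by
    rw [star_eq_conjTranspose, hNH, mul_assoc,
      nonsing_inv_mul_cancel_right _ _ ((isUnit_iff_isUnit_det N).mp hN), add_mul, ← mul_assoc,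
      mul_nonsing_inv _ ((isUnit_iff_isUnit_det D).mp hC'.isUnit)]
    noncomm_ring
  rw [← hN.posSemidef_star_left_conjugate_iff, hconj]
  simpa only [hL.isHermitian.eq] using hL.add (hCD.conjTranspose_mul_mul_same L)

end Positivity

end Matrix

theorem stmt_9_general {n₁ n₂ : ℕ}
    (A : Matrix (Fin n₁) (Fin n₁) ℂ) (C : Matrix (Fin n₂) (Fin n₂) ℂ)
    (B : Matrix (Fin n₁) (Fin n₂) ℂ)
    (hC : C.PosDef) (hC' : (1 - C).PosDef)
    (hB₁ : (A - B * C⁻¹ * Bᴴ).PosSemidef)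
    (hB₂ : ((1 - A) - B * (1 - C)⁻¹ * Bᴴ).PosSemidef) :
    ∀ L : Matrix (Fin n₂) (Fin n₂) ℂ, L.PosSemidef →
      ∀ Atilde : Matrix (Fin n₁) (Fin n₁) ℂ,
        Atilde = A - B * (L - 1) * (1 - C + C * L)⁻¹ * Bᴴ →
        Atilde.PosSemidef ∧ (1 - Atilde).PosSemidef := by
  intro L hL Atilde hAtilde
  have hN := isUnit_one_sub_add_mul hC hC' hL
  rw [hAtilde, Matrix.mul_assoc B]
  constructor
  · rw [sub_one_mul_inv_eq_inv_sub_inv hC.isUnit hN, Matrix.mul_sub, Matrix.sub_mul]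
    convert hB₁.add
      ((hC.one_sub_add_mul_mul_self hC' hL).inv.posSemidef.mul_mul_conjTranspose_same B)
      using 1
    abel
  · rw [sub_one_mul_inv_eq_inv_mul_mul_inv_sub_inv hC'.isUnit hN, Matrix.mul_sub, Matrix.sub_mul]
    convert hB₂.add
      ((posSemidef_inv_one_sub_mul_mul_inv hC.posSemidef hC' hL hN).mul_mul_conjTranspose_same B)
      using 1
    abel

/-- For `A` Hermitian, `C`, `1 - C` positive definite, and `B` with `B C⁻¹ Bᴴ ≤ A` and
`B (1 - C)⁻¹ Bᴴ ≤ 1 - A`, every positive semidefinite `L` gives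
`0 ≤ A - B (L - 1)(1 - C + C L)⁻¹ Bᴴ ≤ 1`. -/
theorem stmt_9 {n₁ n₂ : ℕ}
    (A : Matrix (Fin n₁) (Fin n₁) ℂ) (C : Matrix (Fin n₂) (Fin n₂) ℂ)
    (B : Matrix (Fin n₁) (Fin n₂) ℂ)
    (hA : A.IsHermitian) (hC : C.PosDef) (hC' : (1 - C).PosDef)
    (hB₁ : (A - B * C⁻¹ * Bᴴ).PosSemidef)
    (hB₂ : ((1 - A) - B * (1 - C)⁻¹ * Bᴴ).PosSemidef) :
    ∀ L : Matrix (Fin n₂) (Fin n₂) ℂ, L.PosSemidef →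
      ∀ Atilde : Matrix (Fin n₁) (Fin n₁) ℂ,
        Atilde = A - B * (L - 1) * (1 - C + C * L)⁻¹ * Bᴴ →
        Atilde.PosSemidef ∧ (1 - Atilde).PosSemidef :=
  stmt_9_general A C B hC hC' hB₁ hB₂
end

section
/- Let C be a Hermitian n×n complex matrix such that both C and 1 − C are positive definite, let 0 < ε < 1, and let K be a Hermitian n×n complex matrix satisfying −(1 − ε) C⁻¹ ≤ K ≤ (1 − ε)(1 − C)⁻¹. Then 1 + CK is invertible, the matrix L := 1 − K(1 + CK)⁻¹ is Hermitian and positive semidefinite, the matrix 1 − C + CL is invertible, and (1 − L)(1 − C + CL)⁻¹ = K. -/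
open Matrix
open scoped ComplexOrder

/-!
Put `M = C⁻¹ + K`. The lower bound on `K` gives `M ≥ ε C⁻¹ > 0`, so `1 + C K = C M` is invertible
and `L = C⁻¹ (M⁻¹ - (1 - C) C) C⁻¹`. The upper bound gives `M ≤ C⁻¹ + (1 - C)⁻¹ = ((1 - C) C)⁻¹`,
and since inversion is operator antitone, `M⁻¹ ≥ (1 - C) C`, i.e. `L ≥ 0`. Finally
`1 - C + C L = M⁻¹ C⁻¹`, whose inverse `C M` turns `1 - L` back into `M - C⁻¹ = K`.
-/

namespace Matrix

section Algebra

variable {ι R : Type*} [Fintype ι] [DecidableEq ι] [CommRing R] {C K : Matrix ι ι R}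

theorem one_add_mul_eq_mul_inv_add (hC : IsUnit C) : 1 + C * K = C * (C⁻¹ + K) := by
  rw [mul_add, mul_nonsing_inv _ ((isUnit_iff_isUnit_det C).mp hC)]

theorem inv_inv_add_inv_one_sub (hC : IsUnit C) (hC' : IsUnit (1 - C)) :
    (C⁻¹ + (1 - C)⁻¹)⁻¹ = (1 - C) * C := by
  rw [isUnit_iff_isUnit_det] at hC hC'
  refine inv_eq_right_inv ?_
  have hcomm : (1 - C) * C = C * (1 - C) := by noncomm_ring
  rw [add_mul, nonsing_inv_mul_cancel_left _ _ hC', hcomm, nonsing_inv_mul_cancel_left _ _ hC]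
  abel

theorem one_sub_mul_inv_one_add_mul (hC : IsUnit C) (hM : IsUnit (C⁻¹ + K)) :
    1 - K * (1 + C * K)⁻¹ = C⁻¹ * ((C⁻¹ + K)⁻¹ - (1 - C) * C) * C⁻¹ := by
  rw [one_add_mul_eq_mul_inv_add hC, mul_inv_rev]
  rw [isUnit_iff_isUnit_det] at hC hM
  obtain ⟨M, rfl⟩ : ∃ M, K = M - C⁻¹ := ⟨C⁻¹ + K, by abel⟩
  rw [add_sub_cancel] at hM ⊢
  simp [mul_sub, sub_mul, mul_assoc, hC, hM]
  abel

theorem one_sub_add_mul_conj (hC : IsUnit C) (N : Matrix ι ι R) :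
    1 - C + C * (C⁻¹ * (N - (1 - C) * C) * C⁻¹) = N * C⁻¹ := by
  rw [isUnit_iff_isUnit_det] at hC
  simp [mul_sub, sub_mul, mul_assoc, hC]

theorem one_sub_conj_mul_inv (hC : IsUnit C) (hM : IsUnit (C⁻¹ + K)) :
    (1 - C⁻¹ * ((C⁻¹ + K)⁻¹ - (1 - C) * C) * C⁻¹) * ((C⁻¹ + K)⁻¹ * C⁻¹)⁻¹ = K := by
  rw [isUnit_iff_isUnit_det] at hC hM
  rw [mul_inv_rev, nonsing_inv_nonsing_inv _ hC, nonsing_inv_nonsing_inv _ hM]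
  obtain ⟨M, rfl⟩ : ∃ M, K = M - C⁻¹ := ⟨C⁻¹ + K, by abel⟩
  rw [add_sub_cancel] at hM ⊢
  simp [mul_sub, sub_mul, mul_assoc, hC, hM]
  abel

end Algebra

theorem PosDef.of_posSemidef_sub {m R : Type*} [Ring R] [PartialOrder R] [StarRing R]
    [AddLeftMono R] {A B : Matrix m m R} (hA : A.PosDef) (hAB : (B - A).PosSemidef) :
    B.PosDef := by
  simpa using hA.add_posSemidef hAB

open scoped MatrixOrder Matrix.Norms.L2Operator in
theorem PosDef.posSemidef_inv_sub_inv {ι : Type*} [Fintype ι] [DecidableEq ι]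
    {A B : Matrix ι ι ℂ} (hA : A.PosDef) (hAB : (B - A).PosSemidef) :
    (A⁻¹ - B⁻¹).PosSemidef := by
  have hB : B.PosDef := hA.of_posSemidef_sub hAB
  simpa [le_iff] using CStarAlgebra.inv_le_inv (a := hA.isUnit.unit) (b := hB.isUnit.unit)
    hA.posSemidef.nonneg hAB

end Matrix

theorem stmt_11_general {n : ℕ}
    (C K : Matrix (Fin n) (Fin n) ℂ)
    (hC : C.PosDef) (hC' : (1 - C).PosDef)
    (ε : ℝ) (hε : 0 < ε)
    (hKlow : (K - (-((1 - ε : ℝ) • C⁻¹))).PosSemidef)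
    (hKup : (((1 - ε : ℝ) • (1 - C)⁻¹) - K).PosSemidef)
    (L : Matrix (Fin n) (Fin n) ℂ)
    (hL : L = 1 - K * (1 + C * K)⁻¹) :
    IsUnit (1 + C * K) ∧ L.PosSemidef ∧ IsUnit (1 - C + C * L) ∧
      (1 - L) * (1 - C + C * L)⁻¹ = K := by
  subst hL
  have hM : (C⁻¹ + K).PosDef :=
    (hC.inv.smul hε).of_posSemidef_sub <| by
      rwa [show C⁻¹ + K - ε • C⁻¹ = K - -((1 - ε : ℝ) • C⁻¹) by module]
  have hMB : ((C⁻¹ + (1 - C)⁻¹) - (C⁻¹ + K)).PosSemidef := by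
    convert hKup.add (hC'.inv.smul hε).posSemidef using 1; module
  rw [one_sub_mul_inv_one_add_mul hC.isUnit hM.isUnit, one_sub_add_mul_conj hC.isUnit,
    one_add_mul_eq_mul_inv_add hC.isUnit]
  refine ⟨hC.isUnit.mul hM.isUnit, ?_, hM.inv.isUnit.mul hC.inv.isUnit,
    one_sub_conj_mul_inv hC.isUnit hM.isUnit⟩
  simpa [inv_inv_add_inv_one_sub hC.isUnit hC'.isUnit, hC.isHermitian.inv.eq] using
    (hM.posSemidef_inv_sub_inv hMB).mul_mul_conjTranspose_same C⁻¹

/-- If `C`, `1 - C` are positive definite, `0 < ε < 1`, and `K` is Hermitian with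
`-(1 - ε) C⁻¹ ≤ K ≤ (1 - ε)(1 - C)⁻¹`, then `1 + C K` is invertible,
`L = 1 - K (1 + C K)⁻¹` is (Hermitian) positive semidefinite, `1 - C + C L` is invertible
and `(1 - L)(1 - C + C L)⁻¹ = K`. -/
theorem stmt_11 {n : ℕ}
    (C K : Matrix (Fin n) (Fin n) ℂ)
    (hC : C.PosDef) (hC' : (1 - C).PosDef)
    (ε : ℝ) (hε : 0 < ε) (hε' : ε < 1)
    (hK : K.IsHermitian)
    (hKlow : (K - (-((1 - ε : ℝ) • C⁻¹))).PosSemidef)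
    (hKup : (((1 - ε : ℝ) • (1 - C)⁻¹) - K).PosSemidef)
    (L : Matrix (Fin n) (Fin n) ℂ)
    (hL : L = 1 - K * (1 + C * K)⁻¹) :
    IsUnit (1 + C * K) ∧ L.PosSemidef ∧ IsUnit (1 - C + C * L) ∧
      (1 - L) * (1 - C + C * L)⁻¹ = K :=
  stmt_11_general C K hC hC' ε hε hKlow hKup L hL
end
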